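/- If Ω ⊆ ℍ satisfies Ω ∩ ℝ ≠ ∅ and Ω ∩ ℂ_I is a domain (nonempty open connected set) in ℂ_I for every imaginary unit I ∈ 𝕊, then Ω is a domain (open and connected) in the slice topology τ_s(ℍ). -/

import Mathlib

/-!
Slice-openness is slicewise openness by definition. For connectedness, write `Ω` as the union of
its traces `Ω ∩ ℂ_I` over all imaginary units `I` (every quaternion lies in some `ℂ_I`). Each trace
is connected for `τ_s`, being the image of a connected set under the continuous inclusion
`ℂ_I → (ℍ, τ_s)`, and all traces contain the real point of `Ω`, since `ℝ ⊆ ℂ_I` for every `I`.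
-/

open scoped Quaternion

/-- The slice `ℂ_I = ℝ + ℝI` inside the quaternions. -/
def qslice (I : ℍ[ℝ]) : Set ℍ[ℝ] := {q | ∃ x y : ℝ, q = (x : ℍ[ℝ]) + y • I}

/-- The slice topology on `ℍ`. -/
noncomputable def sliceTopology : TopologicalSpace ℍ[ℝ] :=
  ⨆ I ∈ {I : ℍ[ℝ] | I ^ 2 = -1},
    TopologicalSpace.coinduced (Subtype.val : qslice I → ℍ[ℝ]) inferInstance

open Topology

lemma sq_basis_self_i : ((QuaternionAlgebra.Basis.self ℝ).i : ℍ[ℝ]) ^ 2 = -1 := by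
  rw [sq, QuaternionAlgebra.Basis.i_mul_i]
  simp

lemma sq_inv_norm_smul_im {q : ℍ[ℝ]} (hq : q.im ≠ 0) : (‖q.im‖⁻¹ • q.im) ^ 2 = -1 := by
  have hn : ‖q.im‖ ≠ 0 := norm_ne_zero_iff.mpr hq
  rw [smul_pow, Quaternion.im_sq, Quaternion.normSq_eq_norm_mul_self]
  ext <;> simp
  field_simp

lemma coe_mem_qslice (r : ℝ) (I : ℍ[ℝ]) : (r : ℍ[ℝ]) ∈ qslice I :=
  ⟨r, 0, by rw [zero_smul, add_zero]⟩

lemma exists_sq_eq_neg_one_mem_qslice (q : ℍ[ℝ]) : ∃ I : ℍ[ℝ], I ^ 2 = -1 ∧ q ∈ qslice I := by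
  by_cases hq : q.im = 0
  · refine ⟨_, sq_basis_self_i, ?_⟩
    rw [← q.re_add_im, hq, add_zero]
    exact coe_mem_qslice _ _
  · refine ⟨‖q.im‖⁻¹ • q.im, sq_inv_norm_smul_im hq, q.re, ‖q.im‖, ?_⟩
    rw [smul_smul, mul_inv_cancel₀ (norm_ne_zero_iff.mpr hq), one_smul, q.re_add_im]

lemma iUnion_inter_qslice (Ω : Set ℍ[ℝ]) : ⋃ I : {I : ℍ[ℝ] // I ^ 2 = -1}, Ω ∩ qslice I = Ω := by
  refine Set.Subset.antisymm (Set.iUnion_subset fun _ ↦ Set.inter_subset_left) fun q hq ↦ ?_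
  obtain ⟨I, hI, hqI⟩ := exists_sq_eq_neg_one_mem_qslice q
  exact Set.mem_iUnion.2 ⟨⟨I, hI⟩, hq, hqI⟩

lemma isOpen_sliceTopology_iff {Ω : Set ℍ[ℝ]} :
    IsOpen[sliceTopology] Ω ↔
      ∀ I : ℍ[ℝ], I ^ 2 = -1 → IsOpen (Subtype.val ⁻¹' Ω : Set (qslice I)) := by
  rw [sliceTopology, isOpen_iSup_iff]
  simp only [isOpen_iSup_iff, isOpen_coinduced, Set.mem_ofPred_eq]

lemma continuous_subtype_val_sliceTopology {I : ℍ[ℝ]} (hI : I ^ 2 = -1) :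
    Continuous[_, sliceTopology] (Subtype.val : qslice I → ℍ[ℝ]) :=
  continuous_iff_coinduced_le.2 <| le_iSup₂_of_le (f := fun I (_ : I ^ 2 = -1) ↦
    TopologicalSpace.coinduced (Subtype.val : qslice I → ℍ[ℝ]) inferInstance) I hI le_rfl

lemma isPreconnected_sliceTopology_of_coe_mem {Ω : Set ℍ[ℝ]} {r : ℝ} (hr : (r : ℍ[ℝ]) ∈ Ω)
    (h : ∀ I : ℍ[ℝ], I ^ 2 = -1 → IsPreconnected (Subtype.val ⁻¹' Ω : Set (qslice I))) :
    @IsPreconnected ℍ[ℝ] sliceTopology Ω := by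
  rw [← iUnion_inter_qslice Ω]
  refine @isPreconnected_iUnion _ sliceTopology _ _
    ⟨r, Set.mem_iInter.2 fun I ↦ ⟨hr, coe_mem_qslice r I⟩⟩ fun ⟨I, hI⟩ ↦ ?_
  have := @IsPreconnected.image _ _ _ sliceTopology _ (h I hI) _
    (@Continuous.continuousOn _ _ _ sliceTopology _ _ (continuous_subtype_val_sliceTopology hI))
  rwa [Subtype.image_preimage_coe, Set.inter_comm] at this

/-- If `Ω` meets `ℝ` and every trace `Ω ∩ ℂ_I` is a domain (nonempty open
connected) in `ℂ_I`, then `Ω` is a domain in the slice topology. -/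
theorem st_domain_of_slicewise_domains (Ω : Set ℍ[ℝ])
    (hR : (Ω ∩ Set.range (fun r : ℝ => (r : ℍ[ℝ]))).Nonempty)
    (h : ∀ I : ℍ[ℝ], I ^ 2 = -1 →
      IsOpen (Subtype.val ⁻¹' Ω : Set (qslice I)) ∧
      IsConnected (Subtype.val ⁻¹' Ω : Set (qslice I))) :
    @IsOpen ℍ[ℝ] sliceTopology Ω ∧ @IsConnected ℍ[ℝ] sliceTopology Ω := by
  obtain ⟨_, hrΩ, r, rfl⟩ := hR
  exact ⟨isOpen_sliceTopology_iff.2 fun I hI ↦ (h I hI).1, ⟨_, hrΩ⟩,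
    isPreconnected_sliceTopology_of_coe_mem hrΩ fun I hI ↦ (h I hI).2.2⟩
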